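/- Let u be an admissible function, ε > 0, and p ≥ r_{ε/2}(u), where r_δ(u) = sup {r ≥ 0 : u(r) > δr} (or 0 if empty). Then r_ε(u_p) ≤ (u↑2/ε)·u(p), where u_p(t) = u(p+t) and u↑2 = sup_r u(2r)/u(r). -/
import Mathlib


/-- `r_ε(u) = sup {r ≥ 0 : u(r) > ε r}` (equal to `0` if the set is empty,
by the convention `sSup ∅ = 0` in `ℝ`). -/
noncomputable def rEps (ε : ℝ) (u : ℝ → ℝ) : ℝ :=
  sSup {r : ℝ | 0 ≤ r ∧ ε * r < u r}

/-- If `p ≥ r_{ε/2}(u)`, then `r_ε(u_p) ≤ (u↑2 / ε) · u(p)`, where `u_p(t) = u(p+t)`. -/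
theorem rEps_advanced_function_bound
    (u : ℝ → ℝ)
    (hmono : MonotoneOn u (Set.Ici 0))
    (hge1 : ∀ r : ℝ, 0 ≤ r → 1 ≤ u r)
    (hbdd : ∀ τ : ℝ, 1 < τ → BddAbove {x : ℝ | ∃ r : ℝ, 0 ≤ r ∧ x = u (τ * r) / u r})
    (hsub : Filter.Tendsto (fun r : ℝ => u r / r) Filter.atTop (nhds 0))
    (ε : ℝ) (hε : 0 < ε) (p : ℝ) (hp0 : 0 ≤ p) (hp : rEps (ε / 2) u ≤ p) :
    rEps ε (fun t => u (p + t)) ≤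
      (sSup {x : ℝ | ∃ r : ℝ, 0 ≤ r ∧ x = u (2 * r) / u r} / ε) * u p := by
  set D := sSup {x : ℝ | ∃ r : ℝ, 0 ≤ r ∧ x = u (2 * r) / u r} with hDdef
  have hu0 : (0:ℝ) < u 0 := lt_of_lt_of_le one_pos (hge1 0 le_rfl)
  have hup : (0:ℝ) < u p := lt_of_lt_of_le one_pos (hge1 p hp0)
  have hD1 : (1:ℝ) ≤ D := by
    have : u (2 * 0) / u 0 ≤ D := le_csSup (hbdd 2 one_lt_two) ⟨0, le_rfl, rfl⟩
    have h0 : u (2 * 0) / u 0 = 1 := by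
      rw [mul_zero]; field_simp
    linarith [h0 ▸ this]
  -- boundedness of the set defining rEps (ε/2) u
  have hBT : BddAbove {r : ℝ | 0 ≤ r ∧ ε / 2 * r < u r} := by
    have h2 : (0:ℝ) < ε / 2 := by positivity
    have hev : ∀ᶠ r in Filter.atTop, u r / r < ε / 2 :=
      hsub.eventually (gt_mem_nhds h2)
    obtain ⟨N, hN⟩ := Filter.eventually_atTop.mp hev
    refine ⟨max N 1, ?_⟩
    rintro r ⟨hr0, hr⟩
    by_contra hcon
    push_neg at hcon
    have hrN : N ≤ r := le_trans (le_max_left _ _) hcon.le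
    have hr1 : (0:ℝ) < r := lt_of_lt_of_le one_pos (le_trans (le_max_right _ _) hcon.le)
    have h3 : u r < ε / 2 * r := (div_lt_iff₀ hr1).mp (hN r hrN)
    linarith
  -- key: beyond p the function is below (ε/2) s
  have key : ∀ s : ℝ, p < s → u s ≤ ε / 2 * s := by
    intro s hs
    by_contra hcon
    push_neg at hcon
    have hs0 : 0 ≤ s := le_trans hp0 hs.le
    have : s ≤ rEps (ε / 2) u := le_csSup hBT ⟨hs0, hcon⟩
    linarith
  have hD : u (2 * p) ≤ D * u p := by
    have h1 : u (2 * p) / u p ≤ D := le_csSup (hbdd 2 one_lt_two) ⟨p, hp0, rfl⟩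
    calc u (2 * p) = u (2 * p) / u p * u p := by field_simp
    _ ≤ D * u p := mul_le_mul_of_nonneg_right h1 hup.le
  apply Real.sSup_le
  · rintro t ⟨ht0, ht⟩
    simp only at ht
    by_cases hc : t ≤ p
    · have h1 : u (p + t) ≤ u (2 * p) := by
        apply hmono (Set.mem_Ici.mpr (add_nonneg hp0 ht0))
          (by simp; linarith : 2 * p ∈ Set.Ici (0:ℝ)) (by linarith)
      have h2 : ε * t < D * u p := lt_of_lt_of_le ht (h1.trans hD)
      rw [div_mul_eq_mul_div, le_div_iff₀ hε]
      linarith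
    · exfalso
      push_neg at hc
      have h3 : u (p + t) ≤ ε / 2 * (p + t) := key (p + t) (by linarith)
      have h4 : ε / 2 * p < ε / 2 * t := mul_lt_mul_of_pos_left hc (half_pos hε)
      linarith
  · positivity
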